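/- Importance weight of the strategic-response model: fix B, τ ∈ ℝ with 0 < B, B ≤ τ, and τ + B ≤ 1, and define ω : [0,1] → ℝ by ω(x) = 1 for x ∈ [0, τ − B), ω(x) = (τ − x)/B for x ∈ [τ − B, τ), ω(x) = (−x + τ + 2B)/B for x ∈ [τ, τ + B), and ω(x) = 1 for x ∈ [τ + B, 1]. Then, with respect to the uniform (Lebesgue) measure on [0,1]: ∫₀¹ ω(x) dx = 1 and ∫₀¹ ω(x)² dx − (∫₀¹ ω(x) dx)² = 2B/3; that is, ω is a valid importance weight (the induced distribution is a probability measure) and its variance under the source distribution equals 2B/3. -/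

import Mathlib

open MeasureTheory

/-- The importance weight of the strategic-response model with threshold `τ` and
manipulation budget `B`, as a piecewise function on `[0,1]`. -/
noncomputable def stratW (B τ : ℝ) (x : ℝ) : ℝ :=
  if x < τ - B then 1
  else if x < τ then (τ - x) / B
  else if x < τ + B then (-x + τ + 2 * B) / B
  else 1

/-!
Off the window `[τ - B, τ + B)` the weight is `1`. On each half of the window it is affine
with slope `-1/B`: it sweeps `(0, 1]` on the left half and `(1, 2]` on the right half, so it pushes
Lebesgue measure on the window forward to `B` times Lebesgue measure on `(0, 2)`. Hence
`∫₀¹ h ∘ ω = (1 - 2B) h(1) + B ∫₀² h` for every continuous `h`, and `h = id`, `h = (·)²`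
give `∫ ω = 1` and `∫ ω² = 1 + 2B/3`.
-/

open Set

section IooCongr

variable {f g : ℝ → ℝ} {a b : ℝ}

theorem intervalIntegral.integral_congr_Ioo (hab : a ≤ b) (h : EqOn f g (Ioo a b)) :
    ∫ x in a..b, f x = ∫ x in a..b, g x := by
  simp only [intervalIntegral.integral_of_le hab, integral_Ioc_eq_integral_Ioo]
  exact setIntegral_congr_fun measurableSet_Ioo h

theorem IntervalIntegrable.congr_Ioo (hab : a ≤ b) (h : EqOn f g (Ioo a b))
    (hg : IntervalIntegrable g volume a b) : IntervalIntegrable f volume a b := by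
  rw [intervalIntegrable_iff_integrableOn_Ioo_of_le hab] at hg ⊢
  exact hg.congr_fun h.symm measurableSet_Ioo

end IooCongr

section stratW

variable {B τ x : ℝ}

theorem stratW_of_lt (hx : x < τ - B) : stratW B τ x = 1 := by
  simp [stratW, hx]

theorem stratW_of_mem_Ico_left (hx : x ∈ Ico (τ - B) τ) : stratW B τ x = τ / B - x / B := by
  rw [stratW, if_neg (not_lt.2 hx.1), if_pos hx.2, sub_div]

theorem stratW_of_mem_Ico_right (hB : 0 ≤ B) (hx : x ∈ Ico τ (τ + B)) :
    stratW B τ x = (τ + 2 * B) / B - x / B := by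
  rw [stratW, if_neg (by linarith [hx.1]), if_neg (not_lt.2 hx.1), if_pos hx.2]
  ring

theorem stratW_of_le (hB : 0 ≤ B) (hx : τ + B ≤ x) : stratW B τ x = 1 := by
  rw [stratW, if_neg (by linarith), if_neg (by linarith), if_neg (not_lt.2 hx)]

theorem integral_comp_stratW {h : ℝ → ℝ} (hh : Continuous h) (hB : 0 < B) (hBτ : B ≤ τ)
    (hτB : τ + B ≤ 1) :
    ∫ x in (0 : ℝ)..1, h (stratW B τ x) = (1 - 2 * B) * h 1 + B * ∫ t in (0 : ℝ)..2, h t := by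
  set F := fun x => h (stratW B τ x)
  have h₁ : EqOn F (fun _ => h 1) (Ioo 0 (τ - B)) := fun x hx => by
    simp only [F, stratW_of_lt hx.2]
  have h₂ : EqOn F (fun x => h (τ / B - x / B)) (Ioo (τ - B) τ) := fun x hx => by
    simp only [F, stratW_of_mem_Ico_left (Ioo_subset_Ico_self hx)]
  have h₃ : EqOn F (fun x => h ((τ + 2 * B) / B - x / B)) (Ioo τ (τ + B)) := fun x hx => by
    simp only [F, stratW_of_mem_Ico_right hB.le (Ioo_subset_Ico_self hx)]
  have h₄ : EqOn F (fun _ => h 1) (Ioo (τ + B) 1) := fun x hx => by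
    simp only [F, stratW_of_le hB.le hx.1.le]
  have hc : ∀ c, Continuous fun x => h (c - x / B) := fun c => by fun_prop
  have l₁ : (0 : ℝ) ≤ τ - B := by linarith
  have l₂ : τ - B ≤ τ := by linarith
  have l₃ : τ ≤ τ + B := by linarith
  have i₁ := (intervalIntegrable_const (c := h 1)).congr_Ioo l₁ h₁
  have i₂ := ((hc _).intervalIntegrable _ _).congr_Ioo l₂ h₂
  have i₃ := ((hc _).intervalIntegrable _ _).congr_Ioo l₃ h₃
  have i₄ := (intervalIntegrable_const (c := h 1)).congr_Ioo hτB h₄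
  rw [← intervalIntegral.integral_add_adjacent_intervals ((i₁.trans i₂).trans i₃) i₄,
    ← intervalIntegral.integral_add_adjacent_intervals (i₁.trans i₂) i₃,
    ← intervalIntegral.integral_add_adjacent_intervals i₁ i₂,
    intervalIntegral.integral_congr_Ioo l₁ h₁, intervalIntegral.integral_congr_Ioo l₂ h₂,
    intervalIntegral.integral_congr_Ioo l₃ h₃, intervalIntegral.integral_congr_Ioo hτB h₄,
    intervalIntegral.integral_comp_sub_div h hB.ne', intervalIntegral.integral_comp_sub_div h hB.ne',
    ← intervalIntegral.integral_add_adjacent_intervals (hh.intervalIntegrable 0 1)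
      (hh.intervalIntegrable 1 2)]
  have e₁ : τ / B - τ / B = 0 := sub_self _
  have e₂ : τ / B - (τ - B) / B = 1 := by field_simp; ring
  have e₃ : (τ + 2 * B) / B - (τ + B) / B = 1 := by field_simp; ring
  have e₄ : (τ + 2 * B) / B - τ / B = 2 := by field_simp; ring
  simp only [e₁, e₂, e₃, e₄, intervalIntegral.integral_const, smul_eq_mul]
  ring

end stratW

/-- For `0 < B`, `B ≤ τ`, `τ + B ≤ 1`, the strategic-response importance weight `ω`
integrates to `1` over `[0,1]` with respect to Lebesgue measure (so the induced feature
distribution is a probability measure), and its variance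
`∫ ω² − (∫ ω)²` over `[0,1]` equals `2B/3`. -/
theorem strategic_response_importance_weight
    (B τ : ℝ) (hB : 0 < B) (hBτ : B ≤ τ) (hτB : τ + B ≤ 1) :
    (∫ x in Set.Icc (0 : ℝ) 1, stratW B τ x) = 1 ∧
    (∫ x in Set.Icc (0 : ℝ) 1, (stratW B τ x) ^ 2)
      - (∫ x in Set.Icc (0 : ℝ) 1, stratW B τ x) ^ 2 = 2 * B / 3 := by
  have hIcc : ∀ f : ℝ → ℝ, ∫ x in Icc (0 : ℝ) 1, f x = ∫ x in (0 : ℝ)..1, f x := fun f => by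
    rw [intervalIntegral.integral_of_le zero_le_one, integral_Icc_eq_integral_Ioc]
  have hmean : ∫ x in Icc (0 : ℝ) 1, stratW B τ x = 1 := by
    rw [hIcc]
    refine (integral_comp_stratW (h := id) continuous_id hB hBτ hτB).trans ?_
    simp only [id, integral_id]
    ring
  have hsq : ∫ x in Icc (0 : ℝ) 1, stratW B τ x ^ 2 = 1 + 2 * B / 3 := by
    rw [hIcc]
    refine (integral_comp_stratW (h := (· ^ 2)) (continuous_pow 2) hB hBτ hτB).trans ?_
    simp only [integral_pow]
    ring
  refine ⟨hmean, ?_⟩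
  rw [hmean, hsq]
  ring
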